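/- Let g ≥ 2 and let Π_g be the surface group with presentation ⟨a₁,…,a_g,b₁,…,b_g | ∏_{i=1}^g [a_i,b_i] = 1⟩. Let π be a group and let N be a cyclic subgroup (possibly infinite cyclic) contained in the center of π such that the quotient π/N is isomorphic to Π_g. If the second group homology H₂(π;ℤ) with trivial integer coefficients is isomorphic to ℤ, then N is the trivial subgroup, and hence π is isomorphic to Π_g. -/

import Mathlib

/-!
STATEMENT 4: Let `g ≥ 2` and let `Π_g` be the surface group
`⟨a₁,…,a_g,b₁,…,b_g | ∏ᵢ [aᵢ,bᵢ] = 1⟩`.  Let `π` be a group and `N` a cyclic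
subgroup (possibly infinite cyclic) contained in the center of `π` such that
`π/N ≅ Π_g`.  If `H₂(π;ℤ) ≅ ℤ`, then `N` is trivial, and hence `π ≅ Π_g`.

The condition `π/N ≅ Π_g` is expressed by a surjective homomorphism
`φ : π →* Π_g` with kernel `N`.

Since this version of Mathlib does not contain group homology, we define
`H₂(G;ℤ)` (trivial coefficients) directly as the homology in degree 2 of the
standard inhomogeneous bar complex
`⋯ → ℤ[G³] →d₃ ℤ[G²] →d₂ ℤ[G] → ⋯`, where
`d₂(g₁,g₂) = (g₂) - (g₁g₂) + (g₁)` and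
`d₃(g₁,g₂,g₃) = (g₂,g₃) - (g₁g₂,g₃) + (g₁,g₂g₃) - (g₁,g₂)`.
-/

/-- The bar-complex differential `d₂ : ℤ[G²] → ℤ[G]` for trivial coefficients. -/
noncomputable def barD2 (G : Type) [Group G] : ((G × G) →₀ ℤ) →ₗ[ℤ] (G →₀ ℤ) :=
  Finsupp.linearCombination ℤ fun p : G × G =>
    Finsupp.single p.2 (1 : ℤ) - Finsupp.single (p.1 * p.2) 1 + Finsupp.single p.1 1

/-- The bar-complex differential `d₃ : ℤ[G³] → ℤ[G²]` for trivial coefficients. -/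
noncomputable def barD3 (G : Type) [Group G] : ((G × G × G) →₀ ℤ) →ₗ[ℤ] ((G × G) →₀ ℤ) :=
  Finsupp.linearCombination ℤ fun t : G × G × G =>
    Finsupp.single (t.2.1, t.2.2) (1 : ℤ) - Finsupp.single (t.1 * t.2.1, t.2.2) 1
      + Finsupp.single (t.1, t.2.1 * t.2.2) 1 - Finsupp.single (t.1, t.2.1) 1

/-- The second group homology `H₂(G;ℤ)` of `G` with trivial coefficients in `ℤ`,
defined as `ker d₂ / im d₃` in the bar complex. -/
noncomputable def groupHomology2Z (G : Type) [Group G] : Type :=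
  LinearMap.ker (barD2 G) ⧸
    (LinearMap.range (barD3 G)).comap (LinearMap.ker (barD2 G)).subtype

noncomputable instance (G : Type) [Group G] : AddCommGroup (groupHomology2Z G) := by
  unfold groupHomology2Z; infer_instance

noncomputable instance (G : Type) [Group G] : Module ℤ (groupHomology2Z G) := by
  unfold groupHomology2Z; infer_instance

open scoped commutatorElement in
/-- The single relator `∏ᵢ [aᵢ,bᵢ]` of the genus-`g` surface group, in the free
group on generators `a₁,…,a_g` (as `Sum.inl`) and `b₁,…,b_g` (as `Sum.inr`). -/
def surfaceRelator (g : ℕ) : FreeGroup (Fin g ⊕ Fin g) :=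
  (List.ofFn fun i : Fin g =>
    ⁅FreeGroup.of (Sum.inl i : Fin g ⊕ Fin g), FreeGroup.of (Sum.inr i : Fin g ⊕ Fin g)⁆).prod

/-- The genus-`g` surface group `Π_g = ⟨a₁,…,a_g,b₁,…,b_g | ∏ᵢ [aᵢ,bᵢ] = 1⟩`. -/
def SurfaceGroup (g : ℕ) : Type := PresentedGroup ({surfaceRelator g} : Set (FreeGroup (Fin g ⊕ Fin g)))

noncomputable instance (g : ℕ) : Group (SurfaceGroup g) := by
  unfold SurfaceGroup; infer_instance


/-!
Suppose `x ≠ 1` generates the central kernel of `φ : π → Π_g` and has order `n`. For each index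
`j`, `π` maps to the Heisenberg group `ℤ × ℤ/n × ℤ/n` so that `x` goes to the central generator
and the lift of `a_j` to an element with first coordinate `1`, while the other `a_i` go to
elements with first coordinate `0`. Pulling back the Heisenberg 2-cocycle gives functionals
`L_j : ℤ[π²] → ℤ/n` vanishing on boundaries, and on the commuting-pair cycles
`z_i = (a_i, x) - (x, a_i)` they take the values `L_j(z_i) = δ_ij`. If `H₂(π) ≅ ℤ`, all cycles
are multiples of one class, so `L_0(z_0) L_1(z_1) = L_0(z_1) L_1(z_0)`, i.e. `1 = 0` in `ℤ/n`.
-/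

lemma Ring.choose_two_add {R : Type*} [CommRing R] [BinomialRing R] (r s : R) :
    Ring.choose (r + s) 2 = Ring.choose r 2 + Ring.choose s 2 + r * s := by
  rw [Ring.add_choose_eq 2 (Commute.all r s)]
  simp [Finset.Nat.antidiagonal_succ]
  ring

@[ext]
structure HeisenbergGroup (A : Type*) where
  p : ℤ
  q : A
  z : A

namespace HeisenbergGroup

variable {A : Type*} [AddCommGroup A]

instance : One (HeisenbergGroup A) := ⟨⟨0, 0, 0⟩⟩
instance : Mul (HeisenbergGroup A) := ⟨fun a b => ⟨a.p + b.p, a.q + b.q, a.z + b.z + a.p • b.q⟩⟩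
instance : Inv (HeisenbergGroup A) := ⟨fun a => ⟨-a.p, -a.q, -a.z + a.p • a.q⟩⟩

@[simp] lemma one_p : (1 : HeisenbergGroup A).p = 0 := rfl
@[simp] lemma one_q : (1 : HeisenbergGroup A).q = 0 := rfl
@[simp] lemma one_z : (1 : HeisenbergGroup A).z = 0 := rfl
@[simp] lemma mul_p (a b : HeisenbergGroup A) : (a * b).p = a.p + b.p := rfl
@[simp] lemma mul_q (a b : HeisenbergGroup A) : (a * b).q = a.q + b.q := rfl
@[simp] lemma mul_z (a b : HeisenbergGroup A) : (a * b).z = a.z + b.z + a.p • b.q := rfl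
@[simp] lemma inv_p (a : HeisenbergGroup A) : a⁻¹.p = -a.p := rfl
@[simp] lemma inv_q (a : HeisenbergGroup A) : a⁻¹.q = -a.q := rfl
@[simp] lemma inv_z (a : HeisenbergGroup A) : a⁻¹.z = -a.z + a.p • a.q := rfl

instance : Group (HeisenbergGroup A) where
  mul_assoc a b c := by ext <;> simp [add_smul, smul_add] <;> abel
  one_mul a := by ext <;> simp
  mul_one a := by ext <;> simp
  inv_mul_cancel a := by ext <;> simp

def central (t : A) : HeisenbergGroup A := ⟨0, 0, t⟩

@[simp] lemma central_p (t : A) : (central t).p = 0 := rfl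
@[simp] lemma central_q (t : A) : (central t).q = 0 := rfl
@[simp] lemma central_z (t : A) : (central t).z = t := rfl
@[simp] lemma central_zero : central (0 : A) = 1 := rfl

lemma central_mul_central (s t : A) : central s * central t = central (s + t) := by
  ext <;> simp

lemma central_mem_center (t : A) : central t ∈ Subgroup.center (HeisenbergGroup A) :=
  Subgroup.mem_center_iff.2 fun a => by ext <;> simp; abel

lemma central_zpow (t : A) (m : ℤ) : central t ^ m = central (m • t) := by
  induction m using Int.induction_on with
  | zero => rw [zpow_zero, zero_smul, central_zero]
  | succ m ih => rw [zpow_add_one, ih, central_mul_central, add_smul, one_smul]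
  | pred m ih =>
    rw [zpow_sub_one, ih]
    ext <;> simp [sub_smul]
    abel

lemma prod_ofFn_central {m : ℕ} (f : Fin m → A) :
    (List.ofFn fun i => central (f i)).prod = central (∑ i, f i) := by
  induction m with
  | zero => rfl
  | succ m ih => rw [List.ofFn_succ, List.prod_cons, ih, central_mul_central, Fin.sum_univ_succ]

open scoped commutatorElement in
lemma commutatorElement_mk (p : ℤ) (q : A) :
    ⁅(⟨p, 0, 0⟩ : HeisenbergGroup A), ⟨0, q, 0⟩⁆ = central (p • q) := by
  ext <;> simp [commutatorElement_def]

/-- The binomial term corrects the failure of `a ↦ a.z` to be additive. -/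
def cocycle (a b : HeisenbergGroup A) : A := a.p • b.z + Ring.choose a.p 2 • b.q

lemma cocycle_cocycle (a b c : HeisenbergGroup A) :
    cocycle b c - cocycle (a * b) c + cocycle a (b * c) - cocycle a b = 0 := by
  simp only [cocycle, mul_p, mul_q, mul_z, Ring.choose_two_add, add_smul, smul_add, mul_smul]
  abel

lemma cocycle_sub_cocycle_central (a : HeisenbergGroup A) (t : A) :
    cocycle a (central t) - cocycle (central t) a = a.p • t := by
  simp [cocycle]

end HeisenbergGroup

section BarComplex

variable {G : Type} {A : Type*} [AddCommGroup A]

noncomputable def cochainFunctional (c : G → G → A) : ((G × G) →₀ ℤ) →ₗ[ℤ] A :=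
  Finsupp.linearCombination ℤ fun p => c p.1 p.2

lemma cochainFunctional_barD3 [Group G] {c : G → G → A}
    (hc : ∀ a b d, c b d - c (a * b) d + c a (b * d) - c a b = 0) (v : (G × G × G) →₀ ℤ) :
    cochainFunctional c (barD3 G v) = 0 := by
  suffices cochainFunctional c ∘ₗ barD3 G = 0 from LinearMap.congr_fun this v
  refine Finsupp.lhom_ext fun t n => ?_
  simp [cochainFunctional, barD3, hc]

noncomputable def commutingPairCycle (a b : G) : (G × G) →₀ ℤ :=
  Finsupp.single (a, b) 1 - Finsupp.single (b, a) 1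

lemma commutingPairCycle_mem_ker [Group G] {a b : G} (h : Commute a b) :
    commutingPairCycle a b ∈ LinearMap.ker (barD2 G) := by
  simp [commutingPairCycle, barD2, h.eq]
  abel

lemma cochainFunctional_commutingPairCycle (c : G → G → A) (a b : G) :
    cochainFunctional c (commutingPairCycle a b) = c a b - c b a := by
  simp [cochainFunctional, commutingPairCycle]

noncomputable def groupHomology2Z.lift [Group G] (L : ((G × G) →₀ ℤ) →ₗ[ℤ] A)
    (hL : ∀ v, L (barD3 G v) = 0) : groupHomology2Z G →ₗ[ℤ] A :=
  Submodule.liftQ _ (L ∘ₗ (LinearMap.ker (barD2 G)).subtype) fun z ⟨v, hv⟩ => by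
    simp only [LinearMap.mem_ker, LinearMap.comp_apply, ← hv, hL]

noncomputable def groupHomology2Z.mk [Group G] (z : LinearMap.ker (barD2 G)) :
    groupHomology2Z G :=
  Submodule.Quotient.mk z

end BarComplex

lemma LinearMap.map_mul_map_comm_of_linearEquiv_int {M R : Type*} [AddCommGroup M] [CommRing R]
    (e : M ≃ₗ[ℤ] ℤ) (f₁ f₂ : M →ₗ[ℤ] R) (m₁ m₂ : M) :
    f₁ m₁ * f₂ m₂ = f₁ m₂ * f₂ m₁ := by
  have key (f : M →ₗ[ℤ] R) (m : M) : f m = e m • f (e.symm 1) := by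
    rw [← map_smul, ← map_smul, smul_eq_mul, mul_one, LinearEquiv.symm_apply_apply]
  rw [key f₁ m₁, key f₂ m₂, key f₁ m₂, key f₂ m₁]
  simp only [zsmul_eq_mul]
  ring

lemma mul_comm_of_groupHomology2Z_equiv_int {G : Type} [Group G] {R : Type*} [CommRing R]
    (e : groupHomology2Z G ≃ₗ[ℤ] ℤ) {L₁ L₂ : ((G × G) →₀ ℤ) →ₗ[ℤ] R}
    (h₁ : ∀ v, L₁ (barD3 G v) = 0) (h₂ : ∀ v, L₂ (barD3 G v) = 0)
    (z₁ z₂ : LinearMap.ker (barD2 G)) :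
    L₁ z₁ * L₂ z₂ = L₁ z₂ * L₂ z₁ :=
  (groupHomology2Z.lift L₁ h₁).map_mul_map_comm_of_linearEquiv_int e (groupHomology2Z.lift L₂ h₂)
    (groupHomology2Z.mk z₁) (groupHomology2Z.mk z₂)

lemma MonoidHom.map_mem_zpowers_of_mem_normalClosure {G H : Type*} [Group G] [Group H]
    (f : G →* H) {r : G} (hr : f r ∈ Subgroup.center H) {w : G}
    (hw : w ∈ Subgroup.normalClosure {r}) : f w ∈ Subgroup.zpowers (f r) := by
  have : (Subgroup.zpowers (f r)).Normal :=
    ⟨fun n hn c => by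
      rwa [Subgroup.mem_center_iff.1 (Subgroup.zpowers_le.2 hr hn) c, mul_inv_cancel_right]⟩
  exact Subgroup.normalClosure_le_normal (N := (Subgroup.zpowers (f r)).comap f) (by simp) hw

lemma commute_zpowersHom_of_mem_center {G : Type*} [Group G] {c : G}
    (hc : c ∈ Subgroup.center G) (a : G) (m : Multiplicative ℤ) : Commute a (zpowersHom G c m) :=
  (commute_iff_eq _ _).2 (Subgroup.mem_center_iff.1 (Subgroup.zpow_mem _ hc _) a)

namespace SurfaceGroup

variable {g : ℕ}

def mk (g : ℕ) : FreeGroup (Fin g ⊕ Fin g) →* SurfaceGroup g := PresentedGroup.mk _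

lemma mk_surjective : Function.Surjective (mk g) := QuotientGroup.mk'_surjective _

lemma mk_eq_one_iff {w : FreeGroup (Fin g ⊕ Fin g)} :
    mk g w = 1 ↔ w ∈ Subgroup.normalClosure {surfaceRelator g} :=
  QuotientGroup.eq_one_iff _

lemma mk_surfaceRelator : mk g (surfaceRelator g) = 1 :=
  mk_eq_one_iff.2 (Subgroup.subset_normalClosure rfl)

open scoped commutatorElement in
lemma lift_surfaceRelator {H : Type*} [Group H] (s : Fin g ⊕ Fin g → H) :
    FreeGroup.lift s (surfaceRelator g) =
      (List.ofFn fun i => ⁅s (Sum.inl i), s (Sum.inr i)⁆).prod := by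
  simp [surfaceRelator, map_list_prod, List.map_ofFn, Function.comp_def]

/-- `π` is a quotient of `F × ℤ` via `(w, m) ↦ T(w) xᵐ`; as the relator goes to central elements
of `H` and of `π`, the kernel of this map is killed by `(w, m) ↦ s(w) hᵐ`. -/
lemma exists_monoidHom_of_ker_eq_zpowers {π H : Type*} [Group π] [Group H]
    {φ : π →* SurfaceGroup g} {x : π} (hker : φ.ker = Subgroup.zpowers x)
    (hx : x ∈ Subgroup.center π) {T : Fin g ⊕ Fin g → π} (hT : φ.comp (FreeGroup.lift T) = mk g)
    {k : ℤ} (hk : FreeGroup.lift T (surfaceRelator g) = x ^ k)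
    {h : H} (hh : h ∈ Subgroup.center H) (hxh : ∀ m : ℤ, x ^ m = 1 → h ^ m = 1)
    {s : Fin g ⊕ Fin g → H} (hs : FreeGroup.lift s (surfaceRelator g) = h ^ k) :
    ∃ ρ : π →* H, ρ x = h ∧ ∀ a, ρ (T a) = s a := by
  let q : FreeGroup (Fin g ⊕ Fin g) × Multiplicative ℤ →* π :=
    (FreeGroup.lift T).noncommCoprod (zpowersHom π x) fun _ => commute_zpowersHom_of_mem_center hx _
  let ψ : FreeGroup (Fin g ⊕ Fin g) × Multiplicative ℤ →* H :=
    (FreeGroup.lift s).noncommCoprod (zpowersHom H h) fun _ => commute_zpowersHom_of_mem_center hh _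
  have hq : Function.Surjective q := fun y => by
    obtain ⟨w, hw⟩ := mk_surjective (φ y)
    obtain ⟨m, hm⟩ : ∃ m : ℤ, x ^ m = (FreeGroup.lift T w)⁻¹ * y := by
      rw [← Subgroup.mem_zpowers_iff, ← hker, MonoidHom.mem_ker, map_mul, map_inv,
        ← MonoidHom.comp_apply, hT, hw, inv_mul_cancel]
    exact ⟨(w, Multiplicative.ofAdd m), by simp [q, MonoidHom.noncommCoprod_apply, hm]⟩
  have hqψ : q.ker ≤ ψ.ker := by
    rintro ⟨w, m⟩ hwm
    replace hwm : FreeGroup.lift T w * x ^ m.toAdd = 1 := hwm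
    have hw : w ∈ Subgroup.normalClosure {surfaceRelator g} := by
      rw [← mk_eq_one_iff, ← hT, MonoidHom.comp_apply, eq_inv_of_mul_eq_one_left hwm, map_inv,
        (MonoidHom.mem_ker).1 (hker ▸ Subgroup.zpow_mem_zpowers x _), inv_one]
    have hcenter : (h ^ k, x ^ k) ∈ Subgroup.center (H × π) := by
      rw [Subgroup.center_prod]
      exact ⟨Subgroup.zpow_mem _ hh k, Subgroup.zpow_mem _ hx k⟩
    obtain ⟨α, hα⟩ := Subgroup.mem_zpowers_iff.1 <|
      ((FreeGroup.lift s).prod (FreeGroup.lift T)).map_mem_zpowers_of_mem_normalClosure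
        (by simpa [hs, hk] using hcenter) hw
    simp only [MonoidHom.prod_apply, hs, hk, Prod.pow_mk, Prod.mk.injEq, ← zpow_mul] at hα
    show FreeGroup.lift s w * h ^ m.toAdd = 1
    rw [← hα.1, ← zpow_add]
    exact hxh _ (by rw [zpow_add, hα.2, hwm])
  let ρ := q.liftOfRightInverse _ (Function.rightInverse_surjInv hq) ⟨ψ, hqψ⟩
  have hρ (u) : ρ (q u) = ψ u := q.liftOfRightInverse_comp_apply _ _ ⟨ψ, hqψ⟩ u
  refine ⟨ρ, ?_, fun a => ?_⟩
  · simpa [q, ψ, MonoidHom.noncommCoprod_apply] using hρ (1, Multiplicative.ofAdd 1)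
  · simpa [q, ψ, MonoidHom.noncommCoprod_apply] using hρ (FreeGroup.of a, 1)

end SurfaceGroup

open HeisenbergGroup in
lemma HeisenbergGroup.lift_surfaceRelator {A : Type*} [AddCommGroup A] {g : ℕ}
    (p : Fin g → ℤ) (q : A) :
    FreeGroup.lift (Sum.elim (fun i => (⟨p i, 0, 0⟩ : HeisenbergGroup A)) fun _ => ⟨0, q, 0⟩)
      (surfaceRelator g) = central ((∑ i, p i) • q) := by
  rw [SurfaceGroup.lift_surfaceRelator]
  simp only [Sum.elim_inl, Sum.elim_inr, commutatorElement_mk]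
  rw [prod_ofFn_central, Finset.sum_smul]

open HeisenbergGroup in
theorem isEmpty_groupHomology2Z_linearEquiv_int {g : ℕ} (hg : 2 ≤ g) {π : Type} [Group π]
    {φ : π →* SurfaceGroup g} (hφ : Function.Surjective φ) {x : π}
    (hker : φ.ker = Subgroup.zpowers x) (hx : x ∈ Subgroup.center π) (hx1 : x ≠ 1) :
    IsEmpty (groupHomology2Z π ≃ₗ[ℤ] ℤ) := by
  refine ⟨fun e => ?_⟩
  set n := orderOf x
  have : Nontrivial (ZMod n) := ZMod.nontrivial_iff.2 (mt orderOf_eq_one_iff.1 hx1)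
  obtain ⟨T, hT⟩ : ∃ T : Fin g ⊕ Fin g → π, φ.comp (FreeGroup.lift T) = SurfaceGroup.mk g :=
    ⟨fun a => Function.surjInv hφ (SurfaceGroup.mk g (.of a)),
      FreeGroup.ext_hom _ _ fun a => by simp [Function.surjInv_eq hφ]⟩
  obtain ⟨k, hk⟩ : ∃ k : ℤ, x ^ k = FreeGroup.lift T (surfaceRelator g) := by
    rw [← Subgroup.mem_zpowers_iff, ← hker, MonoidHom.mem_ker, ← MonoidHom.comp_apply, hT,
      SurfaceGroup.mk_surfaceRelator]
  have hρ (j : Fin g) : ∃ ρ : π →* HeisenbergGroup (ZMod n),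
      ρ x = central 1 ∧ ∀ i, (ρ (T (.inl i))).p = if i = j then 1 else 0 := by
    have hxh (m : ℤ) (hm : x ^ m = 1) : central (1 : ZMod n) ^ m = 1 := by
      rw [central_zpow, zsmul_one, (ZMod.intCast_zmod_eq_zero_iff_dvd m n).2
        (orderOf_dvd_iff_zpow_eq_one.2 hm), central_zero]
    -- `a_j ↦ (1, 0, 0)`, `a_i ↦ 1` for `i ≠ j`, and every `b_i ↦ (0, k, 0)`
    have hs := HeisenbergGroup.lift_surfaceRelator (fun i => if i = j then 1 else 0) (k : ZMod n)
    rw [Finset.sum_ite_eq', if_pos (Finset.mem_univ _), one_smul, ← zsmul_one, ← central_zpow]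
      at hs
    obtain ⟨ρ, hρx, hρT⟩ := SurfaceGroup.exists_monoidHom_of_ker_eq_zpowers hker hx hT hk.symm
      (central_mem_center 1) hxh hs
    exact ⟨ρ, hρx, fun i => by simp [hρT]⟩
  choose ρ hρx hρT using hρ
  let L (j : Fin g) := cochainFunctional fun a b => cocycle (ρ j a) (ρ j b)
  have hL (j : Fin g) (v) : L j (barD3 π v) = 0 :=
    cochainFunctional_barD3 (fun a b c => by simpa only [map_mul] using cocycle_cocycle _ _ _) v
  let z (i : Fin g) : LinearMap.ker (barD2 π) :=
    ⟨commutingPairCycle (T (.inl i)) x,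
      commutingPairCycle_mem_ker (Subgroup.mem_center_iff.1 hx _)⟩
  have hLz (i j : Fin g) : L j (z i) = if i = j then 1 else 0 := by
    simp [L, z, cochainFunctional_commutingPairCycle, hρx, cocycle_sub_cocycle_central, hρT]
  have := mul_comm_of_groupHomology2Z_equiv_int e (hL ⟨0, by omega⟩) (hL ⟨1, by omega⟩)
    (z ⟨0, by omega⟩) (z ⟨1, by omega⟩)
  simp [hLz] at this

theorem central_cyclic_extension_of_surface_group_trivial
    (g : ℕ) (hg : 2 ≤ g) (π : Type) [Group π] (N : Subgroup π)
    (hcyclic : ∃ x : π, N = Subgroup.zpowers x)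
    (hcentral : N ≤ Subgroup.center π)
    (φ : π →* SurfaceGroup g) (hφsurj : Function.Surjective φ) (hφker : φ.ker = N)
    (hH2 : Nonempty (groupHomology2Z π ≃ₗ[ℤ] ℤ)) :
    N = ⊥ ∧ Nonempty (π ≃* SurfaceGroup g) := by
  obtain ⟨x, rfl⟩ := hcyclic
  have hx : x = 1 := by
    by_contra hx1
    exact (isEmpty_groupHomology2Z_linearEquiv_int hg hφsurj hφker
      (hcentral (Subgroup.mem_zpowers x)) hx1).false hH2.some
  have hN : Subgroup.zpowers x = ⊥ := Subgroup.zpowers_eq_bot.2 hx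
  exact ⟨hN, ⟨MulEquiv.ofBijective φ ⟨(MonoidHom.ker_eq_bot_iff φ).1 (hφker.trans hN), hφsurj⟩⟩⟩
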